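/- Let R be a ring, with elements g, t satisfying g * t = d * 1 for an invertible central element d, and t * g = s where s ∈ R. Let π_i, π_j, π_k ∈ R be elements each commuting with s. Let m : R ⊗ R → R be an R-bimodule-like multiplication (modeled as: Δ ∈ an (R, R⊗R)-correspondence). Suppose π_k * Δ * (π_i ⊗ π_j) = 0 in the appropriate correspondence group. Then Π_k * Δ_X * (Π_i ⊗ Π_j) = 0, where Π_l = (1/d) g * π_l * t and Δ_X = (1/d)(g ⊗ g ⊗ g)-pushforward of Δ, assuming the compatibility ᵗΓ_p ∘ Δ_X ∘ Γ_{p×p} = d² · (s/d) ∘ Δ ∘ ((s/d) ⊗ (s/d)). -/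

import Mathlib

/-! Put `u = d⁻¹ t`. Then `g u = 1`, so `e = u g = s / d` is an idempotent, and it commutes with the
projectors because `d` is central. Each `Πₗ = g πₗ u` is a conjugate of `πₗ`, and multiplicativity
of `ten` pulls `g ⊗ g` out of `Πᵢ ⊗ Πⱼ`, giving
`Πₖ ΔX (Πᵢ ⊗ Πⱼ) = g πₖ (u ΔX (g ⊗ g)) (πᵢ u ⊗ πⱼ u)`. The compatibility turns the middle factor into
`e (d Δ) (e ⊗ e)`; the idempotent `e` is absorbed by `g` on the left and by `πₗ u` on the right,
leaving `g (πₖ (d Δ) (πᵢ ⊗ πⱼ)) (u ⊗ u) = 0`. -/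

section Descent

variable {R : Type*} [MonoidWithZero R] {g u : R}

theorem mul_mul_rightInverse_eq_of_commute (hgu : g * u = 1) {p : R} (hp : Commute p (u * g)) :
    u * g * (p * u) = p * u := by
  rw [← mul_assoc, ← hp.eq, mul_assoc, mul_assoc, hgu, mul_one]

variable {ten : R → R → R} (hten : ∀ a b c e : R, ten (a * c) (b * e) = ten a b * ten c e)
include hten

theorem ten_conj_eq (p q : R) :
    ten (g * p * u) (g * q * u) = ten g g * ten (p * u) (q * u) := by
  rw [mul_assoc g p, mul_assoc g q, hten]

theorem conj_mul_mul_ten_conj_eq_zero (hgu : g * u = 1) {Δ ΔX πi πj πk : R}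
    (hi : Commute πi (u * g)) (hj : Commute πj (u * g)) (hk : Commute πk (u * g))
    (hvanish : πk * Δ * ten πi πj = 0)
    (hcompat : u * ΔX * ten g g = u * g * Δ * ten (u * g) (u * g)) :
    g * πk * u * ΔX * ten (g * πi * u) (g * πj * u) = 0 :=
  calc g * πk * u * ΔX * ten (g * πi * u) (g * πj * u)
      = g * πk * (u * ΔX * ten g g) * ten (πi * u) (πj * u) := by
        rw [ten_conj_eq hten]; simp only [mul_assoc]
    _ = g * πk * (u * g) * Δ * (ten (u * g) (u * g) * ten (πi * u) (πj * u)) := by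
        rw [hcompat]; simp only [mul_assoc]
    _ = g * (u * g) * πk * Δ * ten (πi * u) (πj * u) := by
        rw [← hten, mul_mul_rightInverse_eq_of_commute hgu hi,
          mul_mul_rightInverse_eq_of_commute hgu hj, mul_assoc g πk, hk.eq, ← mul_assoc]
    _ = g * (πk * Δ * ten πi πj) * ten u u := by
        rw [← mul_assoc g u, hgu, one_mul, hten]; simp only [mul_assoc]
    _ = 0 := by rw [hvanish, mul_zero, zero_mul]

end Descent

/-- Abstract form of the descent of a multiplicative Chow–Künneth relation
along a quotient map. In a ring of correspondences `R` with a tensor-type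
operation `ten` that is multiplicative in each variable, suppose `g * t = d·1`
for an invertible central `d`, `t * g = s`, the projectors `πi, πj, πk`
commute with `s`, and `πk * Δ * (πi ⊗ πj) = 0`. If the small-diagonal
compatibility `t * ΔX * (g ⊗ g) = d² · ((s/d) * Δ * ((s/d) ⊗ (s/d)))` holds,
then `Πk * ΔX * (Πi ⊗ Πj) = 0`, where `Πl = (1/d)·g * πl * t`. -/
theorem stmt_8 {R : Type*} [Ring R] (d g t s Δ ΔX πi πj πk : R) [Invertible d]
    (hd : ∀ r : R, d * r = r * d)
    (hgt : g * t = d * 1) (htg : t * g = s)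
    (ten : R → R → R)
    (hten : ∀ a b c e : R, ten (a * c) (b * e) = ten a b * ten c e)
    (hcommi : πi * s = s * πi) (hcommj : πj * s = s * πj)
    (hcommk : πk * s = s * πk)
    (hvanish : πk * Δ * ten πi πj = 0)
    (hcompat : t * ΔX * ten g g =
      d ^ 2 * ((⅟d * s) * Δ * ten (⅟d * s) (⅟d * s))) :
    (⅟d * g * πk * t) * ΔX * ten (⅟d * g * πi * t) (⅟d * g * πj * t) = 0 := by
  have hD : ∀ r : R, Commute (⅟d) r := fun r => Commute.invOf_left (hd r)
  have hconj : ∀ p : R, ⅟d * g * p * t = g * p * (⅟d * t) := fun p => by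
    rw [(hD g).eq, (hD p).right_comm, mul_assoc (g * p)]
  have hgu : g * (⅟d * t) = 1 := by
    rw [← mul_assoc, ← (hD g).eq, mul_assoc, hgt, mul_one, invOf_mul_self]
  have hug : ⅟d * t * g = ⅟d * s := by rw [mul_assoc, htg]
  have hcomm : ∀ p : R, p * s = s * p → Commute p (⅟d * t * g) := fun p hp => by
    rw [hug]; exact (hD p).symm.mul_right hp
  rw [hconj, hconj, hconj]
  refine conj_mul_mul_ten_conj_eq_zero hten hgu (Δ := d * Δ) (hcomm πi hcommi) (hcomm πj hcommj)
    (hcomm πk hcommk) ?_ ?_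
  · rw [← mul_assoc, ← hd, mul_assoc d, mul_assoc d, hvanish, mul_zero]
  · rw [hug]
    calc ⅟d * t * ΔX * ten g g = ⅟d * (t * ΔX * ten g g) := by simp only [mul_assoc]
      _ = s * Δ * ten (⅟d * s) (⅟d * s) := by
        rw [hcompat, pow_two, mul_assoc d d, invOf_mul_cancel_left]
        simp only [mul_assoc, mul_invOf_cancel_left]
      _ = ⅟d * s * (d * Δ) * ten (⅟d * s) (⅟d * s) := by
        simp only [mul_assoc]; rw [← mul_assoc s d, ← hd, mul_assoc, invOf_mul_cancel_left]
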